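/- There exists a constant C > 0 such that for all n ≤ m and every x ∈ V_{SG_n}, |5^{-n}·h_n(x) − 5^{-m}·h_m(x)| ≤ C·5^{-n}. In particular, for every x ∈ V_* := ∪_n V_{SG_n} the limit lim_{n→∞} 5^{-n}·h_n(x) exists. -/

import Mathlib

/-!
The scaled values are in fact constant in `n`: `h_{n+1} = 5 h_n` on `V_n`, so any `C > 0` works.

By self-similarity, a solution of `Δ_{n+1} u = c` restricts to a solution of `Δ_n u = 5 c` on
`V_n`. This is proved by induction on `n`, together with a formula for the normal derivatives at
the corners of a solution of `Δ_n u = c`: the points where two of the three cells of `SG_{n+1}`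
meet are handled by solving the three midpoint equations. Then `h_{n+1}` and `5 h_n` both vanish
at the corners and have Laplacian `5` on `V_n`, and Green's identity expresses such a function
through the Green function `g_n`.
-/

open scoped Classical BigOperators ENNReal

noncomputable section

/-- Points of the plane. -/
abbrev Pt : Type := ℝ × ℝ

/-- Bottom-left corner `A`. -/
def u1 : Pt := (0, 0)
/-- Top corner `C`. -/
def u2 : Pt := (1/2, Real.sqrt 3 / 2)
/-- Bottom-right corner `B`. -/
def u3 : Pt := (1, 0)

/-- The three corners of the gasket. -/
def corners : Set Pt := {u1, u2, u3}

/-- Vertex set of the `n`-th Sierpinski gasket approximation graph `SG_n`. -/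
def V : ℕ → Set Pt
  | 0 => {u1, u2, u3}
  | n + 1 =>
      (fun p : Pt => (2:ℝ)⁻¹ • p) ''
        (V n ∪ (fun p => u2 + p) '' V n ∪ (fun p => u3 + p) '' V n)

/-- Edge set (as ordered pairs) of `SG_n`. -/
def Ed : ℕ → Set (Pt × Pt)
  | 0 => {(u1, u2), (u2, u3), (u1, u3)}
  | n + 1 =>
      (fun q : Pt × Pt => ((2:ℝ)⁻¹ • q.1, (2:ℝ)⁻¹ • q.2)) ''
        (Ed n ∪ (fun q : Pt × Pt => (u2 + q.1, u2 + q.2)) '' Ed n ∪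
          (fun q : Pt × Pt => (u3 + q.1, u3 + q.2)) '' Ed n)

/-- The `n`-th Sierpinski gasket approximation graph, as a simple graph on the plane
(vertices outside `V n` are isolated). -/
def SG (n : ℕ) : SimpleGraph Pt where
  Adj x y := ((x, y) ∈ Ed n ∨ (y, x) ∈ Ed n) ∧ x ≠ y
  symm := ⟨fun x y h => ⟨h.1.symm, h.2.symm⟩⟩
  loopless := ⟨fun _ h => h.2 rfl⟩

/-- Graph distance on `SG_n`. -/
def gdist (n : ℕ) (x y : Pt) : ℕ := (SG n).dist x y

/-- `d_n x`: graph distance from `x` to the nearest corner of `SG_n`. -/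
def dcorner (n : ℕ) (x : Pt) : ℕ :=
  min (gdist n x u1) (min (gdist n x u2) (gdist n x u3))

/-- Graph Laplacian of `SG_n` at a (non-corner, degree 4) vertex `x`:
`Δ_n f x = 4 f x - ∑_{y ∼ x} f y`. -/
def lap (n : ℕ) (f : Pt → ℝ) (x : Pt) : ℝ :=
  4 * f x - ∑ᶠ (y : Pt) (_ : (SG n).Adj x y), f y

/-- `g : Pt → Pt → ℝ` is the Green function of `SG_n` (stopped at the corners):
it vanishes whenever one argument is a corner, and for every non-corner vertex `y`
the function `x ↦ g x y` has Laplacian `δ_y` at every non-corner vertex `x`. -/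
def IsGreen (n : ℕ) (g : Pt → Pt → ℝ) : Prop :=
  (∀ x y : Pt, x ∈ corners ∨ y ∈ corners → g x y = 0) ∧
    ∀ y ∈ V n, y ∉ corners → ∀ x ∈ V n, x ∉ corners →
      lap n (fun z => g z y) x = if x = y then 1 else 0

/-- `h_n x = ∑_{y ∈ V_{SG_n}} g_n(x,y)`. -/
def hfun (n : ℕ) (g : Pt → Pt → ℝ) (x : Pt) : ℝ := ∑ᶠ y ∈ V n, g x y

/-- Green convolution `(g_n * σ)(x) = ∑_{y ∈ V_{SG_n}} g_n(x,y) σ(y)`. -/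
def conv (n : ℕ) (g : Pt → Pt → ℝ) (σ : Pt → ℕ) (x : Pt) : ℝ :=
  ∑ᶠ y ∈ V n, g x y * (σ y : ℝ)

/-- Midpoint of side `AB`. -/
def mAB : Pt := (2:ℝ)⁻¹ • (u1 + u3)
/-- Midpoint of side `BC`. -/
def mBC : Pt := (2:ℝ)⁻¹ • (u3 + u2)
/-- Midpoint of side `CA`. -/
def mCA : Pt := (2:ℝ)⁻¹ • (u2 + u1)

/-- The recursively defined sandpile configurations `M_n(a,b,c)` on `SG_n`
(value `0` off the vertex set, and junk at level `0`). -/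
def M : ℕ → ℕ → ℕ → ℕ → Pt → ℕ
  | 0, _, _, _, _ => 0
  | 1, a, b, c, x =>
      if x = u1 then a else if x = u3 then b else if x = u2 then c
      else if x = mAB then 3 else if x = mBC then 2 else if x = mCA then 3 else 0
  | n + 2, a, b, c, x =>
      if x = u1 then a else if x = u3 then b else if x = u2 then c
      else if x = mAB then 3 else if x = mBC then 2 else if x = mCA then 3
      else if (2:ℝ) • x ∈ V (n+1) then M (n+1) a 3 3 ((2:ℝ) • x)
      else if (2:ℝ) • x - u3 ∈ V (n+1) then M (n+1) 3 b 2 ((2:ℝ) • x - u3)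
      else if (2:ℝ) • x - u2 ∈ V (n+1) then M (n+1) 3 2 c ((2:ℝ) • x - u2)
      else 0

/-- Centroid of the three corners. -/
def ctr : Pt := (3:ℝ)⁻¹ • (u1 + u2 + u3)

/-- Rotation of the plane by 120° counterclockwise about the centroid. -/
def rotccw (x : Pt) : Pt :=
  (ctr.1 - (x.1 - ctr.1) / 2 - Real.sqrt 3 / 2 * (x.2 - ctr.2),
   ctr.2 + Real.sqrt 3 / 2 * (x.1 - ctr.1) - (x.2 - ctr.2) / 2)

/-- Rotation of the plane by 120° clockwise about the centroid. -/
def rotcw (x : Pt) : Pt :=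
  (ctr.1 - (x.1 - ctr.1) / 2 + Real.sqrt 3 / 2 * (x.2 - ctr.2),
   ctr.2 - Real.sqrt 3 / 2 * (x.1 - ctr.1) - (x.2 - ctr.2) / 2)

/-- The sandpile identity `id_n` on `SG_n` for `n ≥ 2` (junk `0` for `n ≤ 1` and off the
vertex set): value `2` at the corners and side midpoints, the configuration `M_{n-1}(2,2,2)`
rescaled on the bottom-left copy, its clockwise 120° rotation on the top copy, and its
counterclockwise 120° rotation on the bottom-right copy. -/
def sandId : ℕ → Pt → ℕ
  | 0, _ => 0
  | 1, _ => 0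
  | m + 2, x =>
      if x = u1 ∨ x = u2 ∨ x = u3 ∨ x = mAB ∨ x = mBC ∨ x = mCA then 2
      else if (2:ℝ) • x ∈ V (m+1) then M (m+1) 2 2 2 ((2:ℝ) • x)
      else if (2:ℝ) • x - u2 ∈ V (m+1) then M (m+1) 2 2 2 (rotccw ((2:ℝ) • x - u2))
      else if (2:ℝ) • x - u3 ∈ V (m+1) then M (m+1) 2 2 2 (rotcw ((2:ℝ) • x - u3))
      else 0

/-- `V_* = ⋃_n V_{SG_n}`. -/
def Vstar : Set Pt := ⋃ n, V n

/-- The Sierpinski gasket: the closure of `V_*` in the plane. -/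
def SGset : Set Pt := closure Vstar

/-- Euclidean distance on the plane. -/
def eud (x y : Pt) : ℝ := Real.sqrt ((x.1 - y.1) ^ 2 + (x.2 - y.2) ^ 2)

/-- The point of `V n` nearest to `x` in Euclidean distance, ties resolved by taking the
rightmost (largest first coordinate) minimizer. -/
def nearest (n : ℕ) (x : Pt) : Pt :=
  if h : ∃ y ∈ V n, (∀ z ∈ V n, eud x y ≤ eud x z) ∧
      ∀ z ∈ V n, eud x z = eud x y → z.1 ≤ y.1
  then h.choose else x

/-- Piecewise constant continuation `f^▲` of a function on `V n` to the gasket. -/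
def ext (n : ℕ) (f : Pt → ℝ) (x : Pt) : ℝ := f (nearest n x)

/-- Arc length (total variation w.r.t. the Euclidean distance) of a curve
`γ : [0,1] → ℝ²`. -/
def pathLen (γ : ℝ → Pt) : ℝ≥0∞ :=
  ⨆ p : ℕ × {u : ℕ → ℝ // Monotone u ∧ ∀ i, u i ∈ Set.Icc (0:ℝ) 1},
    ∑ i ∈ Finset.range p.1, ENNReal.ofReal (eud (γ (p.2.1 (i + 1))) (γ (p.2.1 i)))

/-- Intrinsic (shortest-path) distance between `x` and `y` through the gasket. -/
def intrinsicD (x y : Pt) : ℝ≥0∞ :=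
  ⨅ (γ : ℝ → Pt) (_ : ContinuousOn γ (Set.Icc 0 1)) (_ : γ 0 = x) (_ : γ 1 = y)
    (_ : Set.MapsTo γ (Set.Icc 0 1) SGset), pathLen γ

/-- `d(x)`: intrinsic shortest-path distance in the gasket from `x` to the nearest corner. -/
def dSG (x : Pt) : ℝ :=
  (min (intrinsicD x u1) (min (intrinsicD x u2) (intrinsicD x u3))).toReal

open Set

def cellMap (a p : Pt) : Pt := (2:ℝ)⁻¹ • (a + p)

lemma cellMap_self (a : Pt) : cellMap a a = a := by
  rw [cellMap, ← two_smul ℝ a, smul_smul]; norm_num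

lemma cellMap_comm (a b : Pt) : cellMap a b = cellMap b a := by
  rw [cellMap, cellMap, add_comm]

lemma cellMap_u1 (p : Pt) : cellMap u1 p = (2:ℝ)⁻¹ • p := by
  rw [cellMap, show u1 = 0 from rfl, zero_add]

lemma two_smul_cellMap_sub (a p : Pt) : (2:ℝ) • cellMap a p - a = p := by
  rw [cellMap, smul_smul]; norm_num

lemma cellMap_two_smul_sub (a x : Pt) : cellMap a ((2:ℝ) • x - a) = x := by
  rw [cellMap, add_sub_cancel, smul_smul]; norm_num

lemma cellMap_injective (a : Pt) : Function.Injective (cellMap a) := fun p q h => by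
  rw [← two_smul_cellMap_sub a p, h, two_smul_cellMap_sub]

lemma V_succ (n : ℕ) : V (n + 1) = ⋃ a ∈ corners, cellMap a '' V n := by
  simp only [V, corners, biUnion_insert, biUnion_singleton, image_union, image_image,
    union_assoc, funext cellMap_u1]
  rfl

lemma mem_V_succ {n : ℕ} {x : Pt} :
    x ∈ V (n + 1) ↔ ∃ a ∈ corners, ∃ z ∈ V n, cellMap a z = x := by
  simp only [V_succ, mem_iUnion, mem_image, exists_prop]

lemma Ed_succ (n : ℕ) :
    Ed (n + 1) = ⋃ a ∈ corners, Prod.map (cellMap a) (cellMap a) '' Ed n := by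
  simp only [Ed, corners, biUnion_insert, biUnion_singleton, image_union, image_image,
    union_assoc, Prod.map, cellMap_u1]
  rfl

lemma mem_Ed_succ {n : ℕ} {x y : Pt} :
    (x, y) ∈ Ed (n + 1) ↔
      ∃ a ∈ corners, ∃ p q, (p, q) ∈ Ed n ∧ cellMap a p = x ∧ cellMap a q = y := by
  simp only [Ed_succ, mem_iUnion, mem_image, Prod.exists, Prod.map, Prod.mk.injEq, exists_prop]

lemma adj_succ_iff {n : ℕ} {x y : Pt} :
    (SG (n + 1)).Adj x y ↔
      ∃ a ∈ corners, ∃ p q, (SG n).Adj p q ∧ cellMap a p = x ∧ cellMap a q = y := by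
  constructor
  · rintro ⟨hxy | hyx, hne⟩
    · obtain ⟨a, ha, p, q, hpq, rfl, rfl⟩ := mem_Ed_succ.1 hxy
      exact ⟨a, ha, p, q, ⟨Or.inl hpq, fun h => hne (h ▸ rfl)⟩, rfl, rfl⟩
    · obtain ⟨a, ha, q, p, hqp, rfl, rfl⟩ := mem_Ed_succ.1 hyx
      exact ⟨a, ha, p, q, ⟨Or.inr hqp, fun h => hne (h ▸ rfl)⟩, rfl, rfl⟩
  · rintro ⟨a, ha, p, q, ⟨hpq | hqp, hne⟩, rfl, rfl⟩
    · exact ⟨Or.inl (mem_Ed_succ.2 ⟨a, ha, p, q, hpq, rfl, rfl⟩),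
        (cellMap_injective a).ne hne⟩
    · exact ⟨Or.inr (mem_Ed_succ.2 ⟨a, ha, q, p, hqp, rfl, rfl⟩),
        (cellMap_injective a).ne hne⟩

lemma corners_subset_V (n : ℕ) : corners ⊆ V n := by
  induction n with
  | zero => exact subset_rfl
  | succ n ih => exact fun a ha => mem_V_succ.2 ⟨a, ha, a, ih ha, cellMap_self a⟩

lemma V_mono : Monotone V := by
  refine monotone_nat_of_le_succ fun n => ?_
  induction n with
  | zero => exact corners_subset_V 1
  | succ n ih =>
    intro x hx
    obtain ⟨a, ha, z, hz, rfl⟩ := mem_V_succ.1 hx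
    exact mem_V_succ.2 ⟨a, ha, z, ih hz, rfl⟩

lemma u1_ne_u2 : u1 ≠ u2 := fun h => by
  have := congrArg Prod.snd h
  simp only [u1, u2] at this
  have : 0 < √3 := by positivity
  linarith

lemma u1_ne_u3 : u1 ≠ u3 := fun h => by
  have := congrArg Prod.fst h
  norm_num [u1, u3] at this

lemma u2_ne_u3 : u2 ≠ u3 := fun h => by
  have := congrArg Prod.fst h
  norm_num [u2, u3] at this

lemma corners_finite : corners.Finite := toFinite {u1, u2, u3}

lemma V_finite (n : ℕ) : (V n).Finite := by
  induction n with
  | zero => exact corners_finite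
  | succ n ih =>
    rw [V_succ]
    exact corners_finite.biUnion fun a _ => ih.image _

lemma mem_V_of_mem_Ed {n : ℕ} {x y : Pt} (h : (x, y) ∈ Ed n) : x ∈ V n ∧ y ∈ V n := by
  induction n generalizing x y with
  | zero =>
    simp only [Ed, mem_insert_iff, mem_singleton_iff, Prod.mk.injEq] at h
    rcases h with ⟨rfl, rfl⟩ | ⟨rfl, rfl⟩ | ⟨rfl, rfl⟩ <;> simp [V]
  | succ n ih =>
    obtain ⟨a, ha, p, q, hpq, rfl, rfl⟩ := mem_Ed_succ.1 h
    exact ⟨mem_V_succ.2 ⟨a, ha, p, (ih hpq).1, rfl⟩,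
      mem_V_succ.2 ⟨a, ha, q, (ih hpq).2, rfl⟩⟩

lemma mem_V_of_adj {n : ℕ} {x y : Pt} (h : (SG n).Adj x y) : x ∈ V n := by
  rcases h.1 with h' | h'
  exacts [(mem_V_of_mem_Ed h').1, (mem_V_of_mem_Ed h').2]

lemma neighborSet_subset_V (n : ℕ) (x : Pt) : (SG n).neighborSet x ⊆ V n :=
  fun _ hy => mem_V_of_adj ((SG n).adj_symm hy)

lemma neighborSet_finite (n : ℕ) (x : Pt) : ((SG n).neighborSet x).Finite :=
  (V_finite n).subset (neighborSet_subset_V n x)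

lemma neighborSet_eq_empty {n : ℕ} {x : Pt} (hx : x ∉ V n) : (SG n).neighborSet x = ∅ :=
  eq_empty_of_forall_notMem fun _ hy => hx (mem_V_of_adj hy)

def triangle : Set Pt := {x | 0 ≤ x.2 ∧ x.2 ≤ √3 * x.1 ∧ x.2 ≤ √3 * (1 - x.1)}

lemma V_subset_triangle (n : ℕ) : V n ⊆ triangle := by
  have h3 : 0 < √3 := by positivity
  induction n with
  | zero =>
    rintro x (rfl | rfl | rfl) <;> refine ⟨?_, ?_, ?_⟩ <;> simp only [u1, u2, u3] <;> nlinarith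
  | succ n ih =>
    intro x hx
    obtain ⟨a, ha, z, hz, rfl⟩ := mem_V_succ.1 hx
    obtain ⟨hz1, hz2, hz3⟩ := ih hz
    rcases ha with rfl | rfl | rfl <;> refine ⟨?_, ?_, ?_⟩ <;>
      simp only [cellMap, u1, u2, u3, Prod.smul_fst, Prod.smul_snd, Prod.fst_add, Prod.snd_add,
        smul_eq_mul] <;> nlinarith

/-- Rescaled: the cells `cellMap a '' V n` and `cellMap b '' V n` meet only in `cellMap a b`. -/
lemma eq_add_of_sub_mem_V {n : ℕ} {a b y : Pt} (ha : a ∈ corners) (hb : b ∈ corners)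
    (hab : a ≠ b) (hya : y - a ∈ V n) (hyb : y - b ∈ V n) : y = a + b := by
  have h3 : 0 < √3 := by positivity
  obtain ⟨ha1, ha2, ha3⟩ := V_subset_triangle n hya
  obtain ⟨hb1, hb2, hb3⟩ := V_subset_triangle n hyb
  rcases ha with rfl | rfl | rfl <;> rcases hb with rfl | rfl | rfl <;>
    first
    | exact absurd rfl hab
    | simp only [u1, u2, u3, Prod.fst_sub, Prod.snd_sub] at ha1 ha2 ha3 hb1 hb2 hb3 ⊢
      refine Prod.ext ?_ ?_ <;> simp only [Prod.fst_add, Prod.snd_add] <;> nlinarith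

lemma eq_of_two_smul_cellMap_sub_mem_V {n : ℕ} {a b z : Pt} (ha : a ∈ corners)
    (hb : b ∈ corners) (hab : a ≠ b) (hz : z ∈ V n)
    (h : (2:ℝ) • cellMap a z - b ∈ V n) : z = b := by
  have := eq_add_of_sub_mem_V ha hb hab (by rwa [two_smul_cellMap_sub]) h
  rw [← two_smul_cellMap_sub a z, this, add_sub_cancel_left]

lemma cellMap_notMem_corners {n : ℕ} {a z : Pt} (ha : a ∈ corners) (hz : z ∈ V n)
    (hza : z ≠ a) : cellMap a z ∉ corners := by
  intro hc
  by_cases hca : cellMap a z = a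
  · exact hza (by rw [← two_smul_cellMap_sub a z, hca, two_smul, add_sub_cancel_right])
  · exact hca (eq_of_two_smul_cellMap_sub_mem_V hc ha hca (corners_subset_V n hc)
      (by rwa [cellMap_self, two_smul_cellMap_sub]))

lemma neighborSet_succ (n : ℕ) (x : Pt) :
    (SG (n + 1)).neighborSet x =
      ⋃ a ∈ corners, cellMap a '' (SG n).neighborSet ((2:ℝ) • x - a) := by
  ext y
  simp only [SimpleGraph.mem_neighborSet, adj_succ_iff, mem_iUnion, mem_image, exists_prop]
  constructor
  · rintro ⟨a, ha, p, q, hpq, rfl, rfl⟩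
    exact ⟨a, ha, q, by rwa [two_smul_cellMap_sub], rfl⟩
  · rintro ⟨a, ha, q, hq, rfl⟩
    exact ⟨a, ha, _, q, hq, cellMap_two_smul_sub a x, rfl⟩

lemma neighborSet_succ_of_forall_notMem {n : ℕ} {a x : Pt} (ha : a ∈ corners)
    (h : ∀ b ∈ corners, b ≠ a → (2:ℝ) • x - b ∉ V n) :
    (SG (n + 1)).neighborSet x = cellMap a '' (SG n).neighborSet ((2:ℝ) • x - a) := by
  rw [neighborSet_succ]
  refine Subset.antisymm (iUnion₂_subset fun b hb => ?_)
    (subset_biUnion_of_mem (u := fun b => cellMap b '' (SG n).neighborSet ((2:ℝ) • x - b)) ha)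
  by_cases hba : b = a
  · rw [hba]
  · rw [neighborSet_eq_empty (h b hb hba), image_empty]
    exact empty_subset _

lemma neighborSet_succ_midpoint {n : ℕ} {a b : Pt} (ha : a ∈ corners) (hb : b ∈ corners)
    (hab : a ≠ b) :
    (SG (n + 1)).neighborSet (cellMap a b) =
      cellMap a '' (SG n).neighborSet b ∪ cellMap b '' (SG n).neighborSet a := by
  rw [neighborSet_succ]
  let cell d := cellMap d '' (SG n).neighborSet ((2:ℝ) • cellMap a b - d)
  refine Subset.antisymm (iUnion₂_subset fun d hd => ?_)
    (union_subset ((subset_biUnion_of_mem (u := cell) ha).trans' ?_)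
      ((subset_biUnion_of_mem (u := cell) hb).trans' ?_))
  · by_cases hda : d = a
    · subst hda; rw [two_smul_cellMap_sub]; exact subset_union_left
    by_cases hdb : d = b
    · subst hdb; rw [cellMap_comm, two_smul_cellMap_sub]; exact subset_union_right
    rw [neighborSet_eq_empty fun h => hdb
      (eq_of_two_smul_cellMap_sub_mem_V ha hd (Ne.symm hda) (corners_subset_V n hb) h).symm,
      image_empty]
    exact empty_subset _
  · simp only [cell, two_smul_cellMap_sub, subset_rfl]
  · simp only [cell, cellMap_comm a b, two_smul_cellMap_sub, subset_rfl]

lemma disjoint_neighborSet_midpoint {n : ℕ} {a b : Pt} (ha : a ∈ corners) (hb : b ∈ corners)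
    (hab : a ≠ b) :
    Disjoint (cellMap a '' (SG n).neighborSet b) (cellMap b '' (SG n).neighborSet a) := by
  rw [disjoint_left]
  rintro _ ⟨q, hq, rfl⟩ ⟨q', hq', he⟩
  have hqb : q = b := eq_of_two_smul_cellMap_sub_mem_V ha hb hab (neighborSet_subset_V n b hq)
    (by rw [← he, two_smul_cellMap_sub]; exact neighborSet_subset_V n a hq')
  exact (SG n).loopless.irrefl b (hqb ▸ hq)

lemma lap_eq (n : ℕ) (f : Pt → ℝ) (x : Pt) :
    lap n f x = 4 * f x - ∑ᶠ y ∈ (SG n).neighborSet x, f y := rfl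

/-- A corner of `SG_n` has two neighbours, hence the factor `2`. -/
def normalDeriv (n : ℕ) (a : Pt) (f : Pt → ℝ) : ℝ :=
  2 * f a - ∑ᶠ y ∈ (SG n).neighborSet a, f y

lemma finsum_neighborSet_succ_of_forall_notMem {n : ℕ} {a x : Pt} (ha : a ∈ corners)
    (h : ∀ b ∈ corners, b ≠ a → (2:ℝ) • x - b ∉ V n) (f : Pt → ℝ) :
    ∑ᶠ y ∈ (SG (n + 1)).neighborSet x, f y =
      ∑ᶠ y ∈ (SG n).neighborSet ((2:ℝ) • x - a), f (cellMap a y) := by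
  rw [neighborSet_succ_of_forall_notMem ha h, finsum_mem_image (cellMap_injective a).injOn]

lemma lap_succ_cellMap {n : ℕ} {a z : Pt} (ha : a ∈ corners) (hz : z ∈ V n)
    (hzc : z ∉ corners) (f : Pt → ℝ) :
    lap (n + 1) f (cellMap a z) = lap n (f ∘ cellMap a) z := by
  have h : ∀ b ∈ corners, b ≠ a → (2:ℝ) • cellMap a z - b ∉ V n := fun b hb hba h =>
    hzc (eq_of_two_smul_cellMap_sub_mem_V ha hb (Ne.symm hba) hz h ▸ hb)
  rw [lap_eq, lap_eq, finsum_neighborSet_succ_of_forall_notMem ha h, two_smul_cellMap_sub]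
  rfl

lemma normalDeriv_succ {n : ℕ} {a : Pt} (ha : a ∈ corners) (f : Pt → ℝ) :
    normalDeriv (n + 1) a f = normalDeriv n a (f ∘ cellMap a) := by
  have h : ∀ b ∈ corners, b ≠ a → (2:ℝ) • cellMap a a - b ∉ V n := fun b hb hba h =>
    hba (eq_of_two_smul_cellMap_sub_mem_V ha hb (Ne.symm hba) (corners_subset_V n ha) h).symm
  conv_lhs => rw [normalDeriv, ← cellMap_self a, finsum_neighborSet_succ_of_forall_notMem ha h,
    two_smul_cellMap_sub]
  rfl

lemma lap_succ_midpoint {n : ℕ} {a b : Pt} (ha : a ∈ corners) (hb : b ∈ corners)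
    (hab : a ≠ b) (f : Pt → ℝ) :
    lap (n + 1) f (cellMap a b) =
      normalDeriv n b (f ∘ cellMap a) + normalDeriv n a (f ∘ cellMap b) := by
  rw [lap_eq, neighborSet_succ_midpoint ha hb hab,
    finsum_mem_union (disjoint_neighborSet_midpoint ha hb hab)
      ((neighborSet_finite n b).image _) ((neighborSet_finite n a).image _),
    finsum_mem_image (cellMap_injective a).injOn, finsum_mem_image (cellMap_injective b).injOn,
    normalDeriv, normalDeriv]
  simp only [Function.comp, cellMap_comm b a]
  ring

def HasConstLap (n : ℕ) (u : Pt → ℝ) (c : ℝ) : Prop :=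
  ∀ x ∈ V n, x ∉ corners → lap n u x = c

lemma HasConstLap.comp_cellMap {n : ℕ} {u : Pt → ℝ} {c : ℝ} (h : HasConstLap (n + 1) u c)
    {a : Pt} (ha : a ∈ corners) : HasConstLap n (u ∘ cellMap a) c := fun z hz hzc => by
  rw [← lap_succ_cellMap ha hz hzc]
  exact h _ (mem_V_succ.2 ⟨a, ha, z, hz, rfl⟩)
    (cellMap_notMem_corners ha hz fun hza => hzc (hza ▸ ha))

def cornerSum (u : Pt → ℝ) : ℝ := u u1 + u u2 + u u3

lemma finsum_mem_corners (u : Pt → ℝ) : ∑ᶠ x ∈ corners, u x = cornerSum u := by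
  rw [corners, finsum_mem_insert _ (by simp [u1_ne_u2, u1_ne_u3]) (toFinite _),
    finsum_mem_pair u2_ne_u3, cornerSum, add_assoc]

lemma neighborSet_zero {a : Pt} (ha : a ∈ corners) : (SG 0).neighborSet a = corners \ {a} := by
  ext y
  simp only [SimpleGraph.mem_neighborSet, SG, Ed, mem_insert_iff, mem_singleton_iff,
    Prod.mk.injEq, mem_sdiff, corners]
  rcases ha with rfl | rfl | rfl <;>
    simp [u1_ne_u2, u1_ne_u3, u2_ne_u3, u1_ne_u2.symm, u1_ne_u3.symm, u2_ne_u3.symm, eq_comm] <;>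
    tauto

lemma normalDeriv_zero {a : Pt} (ha : a ∈ corners) (u : Pt → ℝ) :
    normalDeriv 0 a u = 3 * u a - cornerSum u := by
  have hsplit := finsum_mem_insert u (notMem_sdiff_of_mem (mem_singleton a))
    (corners_finite.subset sdiff_subset)
  rw [insert_sdiff_singleton, insert_eq_of_mem ha, finsum_mem_corners] at hsplit
  rw [normalDeriv, neighborSet_zero ha]
  linarith

/-- `(3/5)^n` is the energy renormalization of `SG_n`, and `(3^n - 1)/2` is a third of the number
of its non-corner vertices. -/
def CornerFlux (n : ℕ) : Prop :=
  ∀ (c : ℝ) (u : Pt → ℝ), HasConstLap n u c → ∀ a ∈ corners,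
    normalDeriv n a u = (3/5 : ℝ) ^ n * (3 * u a - cornerSum u) - c * ((3 ^ n - 1) / 2)

lemma cornerFlux_zero : CornerFlux 0 := fun c u _ a ha => by
  rw [normalDeriv_zero ha]; ring

lemma lap_succ_midpoint_of_cornerFlux {n : ℕ} (hF : CornerFlux n) {u : Pt → ℝ} {c : ℝ}
    {a b : Pt} (ha : a ∈ corners) (hb : b ∈ corners) (hab : a ≠ b)
    (hua : HasConstLap n (u ∘ cellMap a) c) (hub : HasConstLap n (u ∘ cellMap b) c) :
    lap (n + 1) u (cellMap a b) =
      (3/5 : ℝ) ^ n * (6 * u (cellMap a b) - cornerSum (u ∘ cellMap a)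
        - cornerSum (u ∘ cellMap b)) - c * (3 ^ n - 1) := by
  rw [lap_succ_midpoint ha hb hab, hF c _ hua b hb, hF c _ hub a ha]
  simp only [Function.comp, cellMap_comm b a]
  ring

lemma midpoint_eq_of_cornerFlux {n : ℕ} (hF : CornerFlux n) {u : Pt → ℝ} {c : ℝ}
    (hu : HasConstLap (n + 1) u c) {a b : Pt} (ha : a ∈ corners) (hb : b ∈ corners)
    (hab : a ≠ b) :
    (3/5 : ℝ) ^ n * (6 * u (cellMap a b) - cornerSum (u ∘ cellMap a)
      - cornerSum (u ∘ cellMap b)) = c * 3 ^ n := by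
  have key := lap_succ_midpoint_of_cornerFlux hF ha hb hab
    (hu.comp_cellMap ha) (hu.comp_cellMap hb)
  rw [hu _ (mem_V_succ.2 ⟨a, ha, b, corners_subset_V n hb, rfl⟩)
    (cellMap_notMem_corners ha (corners_subset_V n hb) hab.symm)] at key
  linarith

lemma cornerFlux_succ {n : ℕ} (hF : CornerFlux n) : CornerFlux (n + 1) := by
  intro c u hu a ha
  have h1 : u1 ∈ corners := Or.inl rfl
  have h2 : u2 ∈ corners := Or.inr (Or.inl rfl)
  have h3 : u3 ∈ corners := Or.inr (Or.inr rfl)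
  have E12 := midpoint_eq_of_cornerFlux hF hu h1 h2 u1_ne_u2
  have E13 := midpoint_eq_of_cornerFlux hF hu h1 h3 u1_ne_u3
  have E23 := midpoint_eq_of_cornerFlux hF hu h2 h3 u2_ne_u3
  rw [normalDeriv_succ ha, hF c _ (hu.comp_cellMap ha) a ha]
  rcases ha with rfl | rfl | rfl <;>
    simp only [cornerSum, Function.comp, cellMap_self, cellMap_comm u2 u1, cellMap_comm u3 u1,
      cellMap_comm u3 u2] at E12 E13 E23 ⊢
  -- the three midpoint equations determine the values of `u` at the midpoints
  · linear_combination (-2/5 : ℝ) * E12 + (-2/5 : ℝ) * E13 + (-1/5 : ℝ) * E23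
  · linear_combination (-2/5 : ℝ) * E12 + (-1/5 : ℝ) * E13 + (-2/5 : ℝ) * E23
  · linear_combination (-1/5 : ℝ) * E12 + (-2/5 : ℝ) * E13 + (-2/5 : ℝ) * E23

lemma cornerFlux (n : ℕ) : CornerFlux n := by
  induction n with
  | zero => exact cornerFlux_zero
  | succ n ih => exact cornerFlux_succ ih

lemma HasConstLap.of_succ {n : ℕ} {u : Pt → ℝ} {c : ℝ} (hu : HasConstLap (n + 1) u c) :
    HasConstLap n u (5 * c) := by
  induction n generalizing u c with
  | zero => exact fun x hx hxc => absurd hx hxc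
  | succ n ih =>
    intro x hx hxc
    obtain ⟨a, ha, z, hz, rfl⟩ := mem_V_succ.1 hx
    by_cases hzc : z ∈ corners
    · have hza : z ≠ a := fun h => hxc (by rw [h, cellMap_self]; exact ha)
      rw [lap_succ_midpoint_of_cornerFlux (cornerFlux n) ha hzc hza.symm
        (ih (hu.comp_cellMap ha)) (ih (hu.comp_cellMap hzc))]
      linear_combination (5/3 : ℝ) *
        midpoint_eq_of_cornerFlux (cornerFlux (n + 1)) hu ha hzc hza.symm
    · rw [lap_succ_cellMap ha hz hzc]
      exact ih (hu.comp_cellMap ha) z hz hzc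

lemma lap_eq_sum (n : ℕ) (f : Pt → ℝ) (x : Pt) :
    lap n f x = 4 * f x - ∑ y ∈ (V_finite n).toFinset with (SG n).Adj x y, f y := by
  rw [lap_eq, finsum_mem_eq_finite_toFinset_sum _ (neighborSet_finite n x)]
  congr 2
  ext y
  simp only [Finite.mem_toFinset, Finset.mem_filter, SimpleGraph.mem_neighborSet,
    iff_and_self]
  exact fun h => mem_V_of_adj ((SG n).adj_symm h)

lemma lap_finset_sum (n : ℕ) (t : Finset Pt) (F : Pt → Pt → ℝ) (x : Pt) :
    lap n (fun z => ∑ y ∈ t, F z y) x = ∑ y ∈ t, lap n (fun z => F z y) x := by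
  simp only [lap_eq_sum, Finset.mul_sum, Finset.sum_sub_distrib]
  rw [Finset.sum_comm]

lemma sum_mul_lap_comm (n : ℕ) (f w : Pt → ℝ) :
    ∑ x ∈ (V_finite n).toFinset, w x * lap n f x =
      ∑ x ∈ (V_finite n).toFinset, f x * lap n w x := by
  simp only [lap_eq_sum, mul_sub, Finset.sum_sub_distrib, Finset.mul_sum, Finset.sum_filter]
  congr 1
  · exact Finset.sum_congr rfl fun x _ => by ring
  · rw [Finset.sum_comm]
    refine Finset.sum_congr rfl fun x _ => Finset.sum_congr rfl fun y _ => ?_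
    rw [(SG n).adj_comm]
    split_ifs <;> ring

lemma hfun_eq_sum (n : ℕ) (g : Pt → Pt → ℝ) (x : Pt) :
    hfun n g x = ∑ y ∈ (V_finite n).toFinset, g x y :=
  finsum_mem_eq_finite_toFinset_sum _ (V_finite n)

lemma IsGreen.hfun_eq_zero {n : ℕ} {g : Pt → Pt → ℝ} (hg : IsGreen n g) {x : Pt}
    (hx : x ∈ corners) : hfun n g x = 0 := by
  rw [hfun_eq_sum]
  exact Finset.sum_eq_zero fun y _ => hg.1 x y (Or.inl hx)

lemma IsGreen.hasConstLap_hfun {n : ℕ} {g : Pt → Pt → ℝ} (hg : IsGreen n g) :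
    HasConstLap n (hfun n g) 1 := by
  intro x hx hxc
  rw [funext (hfun_eq_sum n g), lap_finset_sum,
    Finset.sum_eq_single_of_mem x ((V_finite n).mem_toFinset.2 hx), hg.2 x hx hxc x hx hxc,
    if_pos rfl]
  intro y hy hyx
  by_cases hyc : y ∈ corners
  · simp [lap_eq, hg.1 _ y (Or.inr hyc)]
  · rw [hg.2 y ((V_finite n).mem_toFinset.1 hy) hyc x hx hxc, if_neg (Ne.symm hyx)]

/-- Green's identity turns `Δ_n g(·, y) = δ_y` into a representation formula. -/
lemma IsGreen.eq_mul_sum {n : ℕ} {g : Pt → Pt → ℝ} (hg : IsGreen n g) {w : Pt → ℝ}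
    {c : ℝ} (hw : ∀ a ∈ corners, w a = 0) (hlap : HasConstLap n w c) {y : Pt}
    (hy : y ∈ V n) : w y = c * ∑ x ∈ (V_finite n).toFinset, g x y := by
  by_cases hyc : y ∈ corners
  · simp [hw y hyc, hg.1 _ y (Or.inr hyc)]
  calc w y = ∑ x ∈ (V_finite n).toFinset, w x * lap n (fun z => g z y) x := by
        rw [Finset.sum_eq_single_of_mem y ((V_finite n).mem_toFinset.2 hy),
          hg.2 y hy hyc y hy hyc, if_pos rfl, mul_one]
        intro x hx hxy
        by_cases hxc : x ∈ corners
        · rw [hw x hxc, zero_mul]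
        · rw [hg.2 y hy hyc x ((V_finite n).mem_toFinset.1 hx) hxc, if_neg hxy, mul_zero]
    _ = ∑ x ∈ (V_finite n).toFinset, g x y * lap n w x := sum_mul_lap_comm n _ w
    _ = c * ∑ x ∈ (V_finite n).toFinset, g x y := by
        rw [Finset.mul_sum]
        refine Finset.sum_congr rfl fun x hx => ?_
        by_cases hxc : x ∈ corners
        · rw [hg.1 x y (Or.inl hxc), zero_mul, mul_zero]
        · rw [hlap x ((V_finite n).mem_toFinset.1 hx) hxc, mul_comm]

lemma hfun_succ_eq {n : ℕ} {g g' : Pt → Pt → ℝ} (hg : IsGreen n g)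
    (hg' : IsGreen (n + 1) g') {x : Pt} (hx : x ∈ V n) :
    hfun (n + 1) g' x = 5 * hfun n g x := by
  rw [hg.eq_mul_sum (fun a ha => hg'.hfun_eq_zero ha) hg'.hasConstLap_hfun.of_succ hx,
    hg.eq_mul_sum (fun a ha => hg.hfun_eq_zero ha) hg.hasConstLap_hfun hx]
  ring

lemma scaled_hfun_eq {g : ℕ → Pt → Pt → ℝ} (hg : ∀ n, IsGreen n (g n)) {n m : ℕ}
    (hnm : n ≤ m) {x : Pt} (hx : x ∈ V n) :
    ((5:ℝ) ^ m)⁻¹ * hfun m (g m) x = ((5:ℝ) ^ n)⁻¹ * hfun n (g n) x := by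
  induction m, hnm using Nat.le_induction with
  | base => rfl
  | succ m hnm ih =>
    rw [hfun_succ_eq (hg m) (hg (m + 1)) (V_mono hnm hx), ← ih, pow_succ]
    field_simp

/-- There is `C > 0` with `|5^{-n}·h_n(x) − 5^{-m}·h_m(x)| ≤ C·5^{-n}` for all
`n ≤ m` and `x ∈ V_{SG_n}`; in particular `lim_{n→∞} 5^{-n}·h_n(x)` exists for `x ∈ V_*`. -/
theorem hfun_scaled_cauchy (g : ℕ → Pt → Pt → ℝ) (hg : ∀ n, IsGreen n (g n)) :
    ∃ C : ℝ, 0 < C ∧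
      (∀ n m : ℕ, n ≤ m → ∀ x ∈ V n,
          |((5:ℝ) ^ n)⁻¹ * hfun n (g n) x - ((5:ℝ) ^ m)⁻¹ * hfun m (g m) x|
            ≤ C * ((5:ℝ) ^ n)⁻¹) ∧
      ∀ x ∈ Vstar, ∃ L : ℝ,
        Filter.Tendsto (fun n : ℕ => ((5:ℝ) ^ n)⁻¹ * hfun n (g n) x)
          Filter.atTop (nhds L) := by
  refine ⟨1, one_pos, fun n m hnm x hx => ?_, fun x hx => ?_⟩
  · rw [scaled_hfun_eq hg hnm hx, sub_self, abs_zero, one_mul]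
    positivity
  · obtain ⟨N, hN⟩ := mem_iUnion.1 hx
    exact ⟨_, tendsto_atTop_of_eventually_const fun m hm => scaled_hfun_eq hg hm hN⟩
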